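/- Suppose |m| − k + 1 ≥ k, i.e., |m| ≥ 2k − 1. Then the linear map f_{k,m} : V_{k−1} → V_k is injective and the dimension of its cokernel equals C(n+k−2, k). -/

import Mathlib

open Finsupp

/-- Multiindices `J : Fin n → ℕ` of total degree `j`. -/
abbrev MIdx (n j : ℕ) : Type := {J : Fin n → ℕ // ∑ i, J i = j}

/-- The complex vector space `V_j` with basis `{e_J : |J| = j}`. -/
abbrev V (n j : ℕ) : Type := MIdx n j →₀ ℂ

/-- `J + 1ᵢ` : the multiindex `J` with its `i`-th entry increased by 1. -/
def incr {n : ℕ} (J : Fin n → ℕ) (i : Fin n) : Fin n → ℕ :=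
  Function.update J i (J i + 1)

lemma sum_incr {n : ℕ} (J : Fin n → ℕ) (i : Fin n) :
    ∑ x, incr J i x = (∑ x, J x) + 1 := by
  unfold incr
  rw [Finset.sum_update_of_mem (Finset.mem_univ i),
    Finset.sdiff_singleton_eq_erase, ← Finset.add_sum_erase _ J (Finset.mem_univ i)]
  ring

/-- The map `f_{j+1,m} : V_j → V_{j+1}`, `e_J ↦ ∑ᵢ (jᵢ+1)(mᵢ−jᵢ) e_{J+1ᵢ}`. -/
noncomputable def fMap (n : ℕ) (m : Fin n → ℕ) (j : ℕ) : V n j →ₗ[ℂ] V n (j + 1) :=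
  Finsupp.lift (V n (j + 1)) ℂ (MIdx n j) fun J =>
    ∑ i, (((J.1 i : ℂ) + 1) * ((m i : ℂ) - (J.1 i : ℂ))) •
      Finsupp.single (⟨incr J.1 i, by rw [sum_incr, J.2]⟩ : MIdx n (j + 1)) (1 : ℂ)

/-- `d(m,j)`: the number of multiindices `J` with `J i ≤ m i` for all `i` and `|J| = j`. -/
noncomputable def dCount (n : ℕ) (m : Fin n → ℕ) (j : ℤ) : ℕ :=
  Set.ncard {J : Fin n → ℕ | (∀ i, J i ≤ m i) ∧ ∑ i, (J i : ℤ) = j}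

/-- `w(m,j) = d(m,j) − d(m,j−1)`. -/
noncomputable def w (n : ℕ) (m : Fin n → ℕ) (j : ℤ) : ℤ :=
  (dCount n m j : ℤ) - (dCount n m (j - 1) : ℤ)

/-!
The operator `e : V_{j+1} → V_j`, `e_K ↦ ∑ᵢ e_{K-1ᵢ}` (terms with `Kᵢ = 0` omitted), satisfies the
`sl₂` relation `e f - f e = |m| - 2j` on `V_j`. By induction on `j`, `e f` then has no eigenvalue
with nonpositive real part on `V_j` as long as `2j < |m|`: an eigenvector `v` for `t` makes `e v` an
eigenvector of `e f` on `V_{j-1}` for `t - (|m| - 2j)`, so `e v = 0` and `v = 0`. In particular `f`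
is injective on `V_{k-1}`, and its cokernel has dimension
`C(n+k-1, k) - C(n+k-2, k-1) = C(n+k-2, k)`.
-/

variable {n : ℕ}

def decr (J : Fin n → ℕ) (i : Fin n) : Fin n → ℕ :=
  Function.update J i (J i - 1)

lemma decr_apply_of_ne (J : Fin n → ℕ) {i l : Fin n} (h : l ≠ i) : decr J i l = J l :=
  Function.update_of_ne h _ _

lemma decr_of_eq_zero {J : Fin n → ℕ} {i : Fin n} (h : J i = 0) : decr J i = J :=
  Function.update_eq_self_iff.mpr (by omega)

lemma decr_incr (J : Fin n → ℕ) (i : Fin n) : decr (incr J i) i = J := by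
  simp [decr, incr]

lemma incr_decr {J : Fin n → ℕ} {i : Fin n} (h : J i ≠ 0) : incr (decr J i) i = J := by
  rw [incr, decr, Function.update_self, Function.update_idem, Nat.sub_add_cancel (by omega),
    Function.update_eq_self]

lemma incr_decr_comm (J : Fin n → ℕ) {i l : Fin n} (h : i ≠ l) :
    incr (decr J l) i = decr (incr J i) l := by
  simp only [incr, decr, Function.update_of_ne h, Function.update_of_ne h.symm]
  exact Function.update_comm h.symm _ _ _

noncomputable def eVec (j : ℕ) (K : Fin n → ℕ) : V n j :=
  if h : ∑ i, K i = j then single ⟨K, h⟩ 1 else 0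

lemma eVec_of_sum_eq {j : ℕ} {K : Fin n → ℕ} (h : ∑ i, K i = j) :
    eVec j K = single ⟨K, h⟩ 1 :=
  dif_pos h

lemma eVec_val {j : ℕ} (J : MIdx n j) : eVec j J.1 = single J 1 :=
  eVec_of_sum_eq J.2

lemma eVec_of_sum_ne {j : ℕ} {K : Fin n → ℕ} (h : ∑ i, K i ≠ j) : eVec j K = 0 :=
  dif_neg h

noncomputable def fCoeff (m K : Fin n → ℕ) (i : Fin n) : ℂ :=
  ((K i : ℂ) + 1) * ((m i : ℂ) - K i)

lemma fCoeff_decr_of_ne (m K : Fin n → ℕ) {i l : Fin n} (h : i ≠ l) :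
    fCoeff m (decr K l) i = fCoeff m K i := by
  rw [fCoeff, fCoeff, decr_apply_of_ne K h]

lemma fMap_single (m : Fin n → ℕ) {j : ℕ} (J : MIdx n j) :
    fMap n m j (single J 1) = ∑ i, fCoeff m J.1 i • eVec (j + 1) (incr J.1 i) := by
  simp only [fMap, lift_apply, zero_smul, sum_single_index, one_smul]
  refine Finset.sum_congr rfl fun i _ => ?_
  rw [eVec_of_sum_eq (by rw [sum_incr, J.2]), fCoeff]

lemma fMap_eVec (m : Fin n → ℕ) (j : ℕ) (K : Fin n → ℕ) :
    fMap n m j (eVec j K) = ∑ i, fCoeff m K i • eVec (j + 1) (incr K i) := by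
  by_cases h : ∑ i, K i = j
  · rw [eVec_of_sum_eq h, fMap_single]
  · rw [eVec_of_sum_ne h, map_zero]
    refine (Finset.sum_eq_zero fun i _ => ?_).symm
    rw [eVec_of_sum_ne (by rw [sum_incr]; omega), smul_zero]

/-- A term with `K i = 0` has `decr K i = K`, of degree `j + 1`, so `eVec j` drops it. -/
noncomputable def eMap (n j : ℕ) : V n (j + 1) →ₗ[ℂ] V n j :=
  Finsupp.lift (V n j) ℂ (MIdx n (j + 1)) fun K => ∑ i, eVec j (decr K.1 i)

lemma eMap_single {j : ℕ} (K : MIdx n (j + 1)) :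
    eMap n j (single K 1) = ∑ i, eVec j (decr K.1 i) := by
  simp only [eMap, lift_apply, zero_smul, sum_single_index, one_smul]

lemma eMap_eVec {j : ℕ} {K : Fin n → ℕ} (h : ∑ i, K i = j + 1) :
    eMap n j (eVec (j + 1) K) = ∑ i, eVec j (decr K i) := by
  rw [eVec_of_sum_eq h, eMap_single]

/-- The eigenvalue `|m| - 2j` of `h ∈ sl₂` on `V_j`. -/
noncomputable def hWeight (m : Fin n → ℕ) (j : ℕ) : ℂ :=
  ((∑ i, m i : ℕ) : ℂ) - 2 * j

lemma hWeight_eq_sum (m : Fin n → ℕ) {j : ℕ} (J : MIdx n j) :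
    hWeight m j = ∑ i, ((m i : ℂ) - 2 * J.1 i) := by
  have hJ : ∑ i, (J.1 i : ℂ) = j := by exact_mod_cast J.2
  rw [hWeight, Finset.sum_sub_distrib, ← Finset.mul_sum, hJ, Nat.cast_sum]

lemma hWeight_re_pos (m : Fin n → ℕ) {j : ℕ} (hj : 2 * j < ∑ i, m i) : 0 < (hWeight m j).re := by
  have : (2 * j : ℝ) < (∑ i, m i : ℕ) := by exact_mod_cast hj
  simpa [hWeight] using this

lemma fCoeff_smul_eVec_sub (m : Fin n → ℕ) {j : ℕ} (J : MIdx n j) (i : Fin n) :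
    fCoeff m J.1 i • eVec j (decr (incr J.1 i) i)
        - fCoeff m (decr J.1 i) i • eVec j (incr (decr J.1 i) i)
      = ((m i : ℂ) - 2 * J.1 i) • single J 1 := by
  rw [decr_incr, eVec_val]
  by_cases hJ : J.1 i = 0
  · rw [decr_of_eq_zero hJ, eVec_of_sum_ne (by rw [sum_incr, J.2]; omega), smul_zero, sub_zero,
      fCoeff, hJ]
    simp
  · rw [incr_decr hJ, eVec_val, ← sub_smul, fCoeff, fCoeff, decr, Function.update_self,
      Nat.cast_sub (by omega)]
    congr 1
    push_cast
    ring

/-- The double sum is `f (e e_J)` when `j > 0` and vanishes when `j = 0`. -/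
lemma eMap_fMap_single (m : Fin n → ℕ) {j : ℕ} (J : MIdx n j) :
    eMap n j (fMap n m j (single J 1))
      = ∑ l, ∑ i, fCoeff m (decr J.1 l) i • eVec j (incr (decr J.1 l) i)
        + hWeight m j • single J 1 := by
  have hdiag (l : Fin n) :
      ∑ i, (fCoeff m J.1 i • eVec j (decr (incr J.1 i) l)
          - fCoeff m (decr J.1 l) i • eVec j (incr (decr J.1 l) i))
        = ((m l : ℂ) - 2 * J.1 l) • single J 1 := by
    rw [Finset.sum_eq_single l (fun i _ hi => by
        rw [incr_decr_comm J.1 hi, fCoeff_decr_of_ne m J.1 hi, sub_self]) (by simp)]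
    exact fCoeff_smul_eVec_sub m J l
  have hsum (i : Fin n) : ∑ x, incr J.1 i x = j + 1 := by rw [sum_incr, J.2]
  refine eq_add_of_sub_eq' ?_
  simp only [fMap_single, map_sum, map_smul, fun i => eMap_eVec (hsum i), Finset.smul_sum]
  rw [Finset.sum_comm, ← Finset.sum_sub_distrib]
  simp only [← Finset.sum_sub_distrib, hdiag, ← Finset.sum_smul, ← hWeight_eq_sum]

lemma eMap_comp_fMap_succ (m : Fin n → ℕ) (j : ℕ) :
    eMap n (j + 1) ∘ₗ fMap n m (j + 1)
      = fMap n m j ∘ₗ eMap n j + hWeight m (j + 1) • LinearMap.id := by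
  refine lhom_ext' fun J => LinearMap.ext_ring ?_
  simp only [LinearMap.comp_apply, lsingle_apply, LinearMap.add_apply, LinearMap.smul_apply,
    LinearMap.id_apply, eMap_fMap_single, eMap_single, map_sum, fMap_eVec]

lemma eMap_comp_fMap_zero (m : Fin n → ℕ) :
    eMap n 0 ∘ₗ fMap n m 0 = hWeight m 0 • LinearMap.id := by
  refine lhom_ext' fun J => LinearMap.ext_ring ?_
  simp only [LinearMap.comp_apply, lsingle_apply, LinearMap.smul_apply, LinearMap.id_apply,
    eMap_fMap_single]
  rw [add_eq_right]
  refine Finset.sum_eq_zero fun l _ => Finset.sum_eq_zero fun i _ => ?_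
  rw [eVec_of_sum_ne (by rw [sum_incr]; omega), smul_zero]

lemma sub_hWeight_ne_zero (m : Fin n → ℕ) {j : ℕ} (hj : 2 * j < ∑ i, m i) {t : ℂ}
    (ht : t.re ≤ 0) : t - hWeight m j ≠ 0 :=
  sub_ne_zero.mpr (ne_of_apply_ne Complex.re (ht.trans_lt (hWeight_re_pos m hj)).ne)

lemma eq_zero_of_eMap_fMap_eq_smul (m : Fin n → ℕ) {j : ℕ} (hj : 2 * j < ∑ i, m i) {t : ℂ}
    (ht : t.re ≤ 0) {v : V n j} (hv : eMap n j (fMap n m j v) = t • v) : v = 0 := by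
  induction j generalizing t with
  | zero =>
    have hv0 : (t - hWeight m 0) • v = 0 := by
      rw [sub_smul, ← hv, ← LinearMap.comp_apply, eMap_comp_fMap_zero]
      simp
    exact (smul_eq_zero.mp hv0).resolve_left (sub_hWeight_ne_zero m hj ht)
  | succ j ih =>
    have hfe : fMap n m j (eMap n j v) = (t - hWeight m (j + 1)) • v := by
      have hcomm := LinearMap.congr_fun (eMap_comp_fMap_succ m j) v
      simp only [LinearMap.comp_apply, LinearMap.add_apply, LinearMap.smul_apply,
        LinearMap.id_apply, hv] at hcomm
      rw [sub_smul, hcomm, add_sub_cancel_right]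
    have hev : eMap n j v = 0 := by
      have hre : (t - hWeight m (j + 1)).re ≤ 0 := by
        rw [Complex.sub_re]
        linarith [hWeight_re_pos m hj]
      refine ih (by omega) hre ?_
      rw [hfe, map_smul]
    have hv0 : (t - hWeight m (j + 1)) • v = 0 := by rw [← hfe, hev, map_zero]
    exact (smul_eq_zero.mp hv0).resolve_left (sub_hWeight_ne_zero m hj ht)

lemma fMap_injective (m : Fin n → ℕ) {j : ℕ} (hj : 2 * j < ∑ i, m i) :
    Function.Injective (fMap n m j) :=
  (injective_iff_map_eq_zero _).mpr fun v hv =>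
    eq_zero_of_eMap_fMap_eq_smul m hj (t := 0) le_rfl (by rw [hv, map_zero, zero_smul])

instance (n j : ℕ) : Fintype (MIdx n j) :=
  Fintype.subtype (Finset.piAntidiag Finset.univ j) (by simp [Finset.mem_piAntidiag])

lemma finrank_V (n j : ℕ) : Module.finrank ℂ (V n j) = (n + j - 1).choose j := by
  rw [Module.finrank_finsupp_self, Fintype.card_of_subtype (Finset.piAntidiag Finset.univ j)
      (by simp [Finset.mem_piAntidiag]), ← Finset.map_sym_eq_piAntidiag, Finset.card_map,
    Finset.sym_univ, Finset.card_univ, Sym.card_sym_eq_choose, Fintype.card_fin]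

/-- If `|m| − k + 1 ≥ k`, then `f_{k,m} : V_{k−1} → V_k` is injective and
`dim coker f_{k,m} = C(n+k−2, k)`. -/
theorem injective_coker_of_large_weight (n k : ℕ) (hn : 1 ≤ n) (hk : 1 ≤ k) (m : Fin n → ℕ)
    (h : (k : ℤ) ≤ (∑ i, (m i : ℤ)) - k + 1) :
    Function.Injective (fMap n m (k - 1)) ∧
    Module.finrank ℂ (V n (k - 1 + 1) ⧸ LinearMap.range (fMap n m (k - 1)))
      = Nat.choose (n + k - 2) k := by
  obtain ⟨n, rfl⟩ : ∃ n', n = n' + 1 := ⟨n - 1, by omega⟩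
  obtain ⟨k, rfl⟩ : ∃ k', k = k' + 1 := ⟨k - 1, by omega⟩
  simp only [Nat.add_one_sub_one]
  have hm : 2 * k < ∑ i, m i := by
    have := Nat.cast_sum (R := ℤ) Finset.univ m
    omega
  have hinj := fMap_injective m hm
  refine ⟨hinj, ?_⟩
  rw [Submodule.finrank_quotient, LinearMap.finrank_range_of_inj hinj, finrank_V, finrank_V,
    show n + 1 + (k + 1) - 1 = n + k + 1 by omega, show n + 1 + k - 1 = n + k by omega,
    show n + 1 + (k + 1) - 2 = n + k by omega, Nat.choose_succ_succ']
  omega
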